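/- arXiv:2203.17144 — 2 statements merged into one kernel-verified Lean document; each statement's English description precedes it below -/
import Mathlib

section
/- Let p : ℕ → (0,1] be a sequence with log(1/p_j) = o(j) as j → ∞. For τ ≥ 2/p_0, define M(τ) = max{ j ≥ 0 : Σ_{k=0}^j (1/p_k) ≤ τ/2 }. Then M(τ) = ω(log τ) as τ → ∞, i.e., for every C > 1 there exists τ_0 such that for all τ ≥ τ_0, M(τ) ≥ C log τ. -/
/-!
If `1/p_k ≤ e^{ck}` for all large `k` and every `c > 0`, then the partial sums of `1/p_k` up to
`n` are `O(e^{εn})` for every `ε > 0`. Taking `ε = 1/(2C)` and `M = ⌈C log τ⌉`, the sum up to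
`M` is `O(√τ)`, hence at most `τ/2` once `τ` is large.
-/

open Filter Finset Real

lemma sum_range_le_sum_range_add_mul_exp {a : ℕ → ℝ} (ha : ∀ k, 0 ≤ a k) {c : ℝ} (hc : 0 ≤ c)
    {J : ℕ} (hJ : ∀ j ≥ J, a j ≤ exp (c * j)) (n : ℕ) :
    ∑ k ∈ range n, a k ≤ ∑ k ∈ range J, a k + n * exp (c * n) := by
  rw [← sum_filter_add_sum_filter_not (range n) (· < J)]
  refine add_le_add ?_ ?_
  · refine sum_le_sum_of_subset_of_nonneg (fun k hk => ?_) (fun k _ _ => ha k)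
    simp only [mem_filter, mem_range] at hk ⊢
    exact hk.2
  · calc ∑ k ∈ (range n).filter (¬ · < J), a k
        ≤ ∑ _k ∈ (range n).filter (¬ · < J), exp (c * n) := by
          refine sum_le_sum fun k hk => ?_
          simp only [mem_filter, mem_range, not_lt] at hk
          exact (hJ k hk.2).trans (exp_le_exp.2 (by gcongr; exact hk.1.le))
      _ ≤ ∑ _k ∈ range n, exp (c * n) :=
          sum_le_sum_of_subset_of_nonneg (filter_subset _ _) (fun _ _ _ => (exp_pos _).le)
      _ = n * exp (c * n) := by rw [sum_const, card_range, nsmul_eq_mul]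

lemma exists_sum_range_le_mul_exp {a : ℕ → ℝ} (ha : ∀ k, 0 ≤ a k)
    (hgrowth : ∀ c > 0, ∃ J : ℕ, ∀ j ≥ J, a j ≤ exp (c * j)) {ε : ℝ} (hε : 0 < ε) :
    ∃ B : ℝ, ∀ n : ℕ, ∑ k ∈ range n, a k ≤ B * exp (ε * n) := by
  obtain ⟨J, hJ⟩ := hgrowth (ε / 2) (half_pos hε)
  set A := ∑ k ∈ range J, a k
  refine ⟨A + 2 / ε, fun n => ?_⟩
  have hA : 0 ≤ A := sum_nonneg fun k _ => ha k
  have hexp_ge_one : 1 ≤ exp (ε * n) := one_le_exp (by positivity)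
  -- `x ≤ e^x` at `x = εn/2` absorbs the factor `n` into a second `e^{εn/2}`.
  have hn : (n : ℝ) ≤ 2 / ε * exp (ε / 2 * n) := by
    have := add_one_le_exp (ε / 2 * n)
    rw [div_mul_eq_mul_div, le_div_iff₀ hε]
    linarith
  calc ∑ k ∈ range n, a k ≤ A + n * exp (ε / 2 * n) :=
        sum_range_le_sum_range_add_mul_exp ha (half_pos hε).le hJ n
    _ ≤ A * exp (ε * n) + 2 / ε * exp (ε / 2 * n) * exp (ε / 2 * n) := by
        gcongr
        · exact le_mul_of_one_le_right hA hexp_ge_one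
    _ = (A + 2 / ε) * exp (ε * n) := by
        rw [mul_assoc, ← exp_add]
        ring_nf

lemma eventually_mul_sqrt_le_half (K : ℝ) : ∀ᶠ τ in atTop, K * √τ ≤ τ / 2 := by
  filter_upwards [tendsto_sqrt_atTop.eventually_ge_atTop (2 * K), eventually_ge_atTop 0]
    with τ hτ hτ0
  nlinarith [mul_self_sqrt hτ0, sqrt_nonneg τ]

theorem stmt1 (p : ℕ → ℝ) (hp : ∀ j, 0 < p j ∧ p j ≤ 1)
    (hlittle : ∀ c : ℝ, 0 < c → ∃ J : ℕ, ∀ j ≥ J, Real.log (1 / p j) ≤ c * j) :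
    ∀ C : ℝ, 1 < C → ∃ τ₀ : ℝ, ∀ τ : ℝ, τ₀ ≤ τ → 2 / p 0 ≤ τ →
      ∃ M : ℕ, (∑ k ∈ Finset.range (M + 1), 1 / p k ≤ τ / 2) ∧
        C * Real.log τ ≤ (M : ℝ) := by
  intro C hC
  have hC0 : 0 < C := zero_lt_one.trans hC
  have hgrowth : ∀ c > 0, ∃ J : ℕ, ∀ j ≥ J, 1 / p j ≤ exp (c * j) := fun c hc =>
    (hlittle c hc).imp fun J hJ j hj => (log_le_iff_le_exp (by simp [(hp j).1])).1 (hJ j hj)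
  set ε := 1 / (2 * C)
  obtain ⟨B, hB⟩ := exists_sum_range_le_mul_exp (fun k => (one_div_pos.2 (hp k).1).le) hgrowth
    (show 0 < ε by positivity)
  have hB0 : 0 ≤ B := by simpa using hB 0
  obtain ⟨τ₀, hτ₀⟩ := eventually_atTop.1
    ((eventually_mul_sqrt_le_half (B * exp (2 * ε))).and (eventually_ge_atTop 1))
  refine ⟨τ₀, fun τ hτ _ => ⟨⌈C * log τ⌉₊, ?_, Nat.le_ceil _⟩⟩
  obtain ⟨hsqrt, hτ1⟩ := hτ₀ τ hτ
  have hCl : 0 ≤ C * log τ := mul_nonneg hC0.le (log_nonneg hτ1)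
  have hM : ((⌈C * log τ⌉₊ + 1 : ℕ) : ℝ) ≤ C * log τ + 2 := by
    push_cast
    linarith [Nat.ceil_lt_add_one hCl]
  calc ∑ k ∈ range (⌈C * log τ⌉₊ + 1), 1 / p k
      ≤ B * exp (ε * ((⌈C * log τ⌉₊ + 1 : ℕ) : ℝ)) := hB _
    _ ≤ B * exp (ε * (C * log τ + 2)) := by gcongr
    _ = B * exp (2 * ε) * √τ := by
        rw [sqrt_eq_rpow, rpow_def_of_pos (by linarith), mul_assoc, ← exp_add]
        congr 2
        simp only [ε]
        field_simp
        ring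
    _ ≤ τ / 2 := hsqrt
end

section
/- Let λ ∈ (0,1), let p : ℕ → (0,1] be a send sequence, and suppose there are infinitely many j with p_j ≤ (λ p_0 / 2)^j. Let r = 1 - e^{-λ p_0}. Then the series Σ_{j≥1} r^{j-1} (1-r) (Σ_{k=1}^j 1/p_k) diverges. -/
/-! With `c = λ p₀ / 2` we have `c ≤ r`, because `1 - e^{-x} ≥ x / 2` on `[0, 1]`. Whenever
`p_{n+1} ≤ c^{n+1}`, the `n`-th term is at least `r^n (1 - r) / c^{n+1} ≥ (1 - r) / c`; this happens
for infinitely many `n`, so the terms do not tend to zero. -/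

open Filter Real Finset

lemma half_le_one_sub_exp_neg {x : ℝ} (hx0 : 0 ≤ x) (hx1 : x ≤ 1) : x / 2 ≤ 1 - exp (-x) := by
  have hexp : exp (-x) ≤ (1 + x)⁻¹ := by
    rw [exp_neg]
    exact inv_anti₀ (by linarith) (by linarith [add_one_le_exp x])
  have hinv : (1 + x)⁻¹ ≤ 1 - x / 2 := by
    rw [inv_le_iff_one_le_mul₀ (by linarith)]
    nlinarith
  linarith

lemma not_summable_of_frequently_le {f : ℕ → ℝ} {ε : ℝ} (hε : 0 < ε)
    (h : ∃ᶠ n in atTop, ε ≤ f n) : ¬ Summable f := fun hs =>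
  let ⟨_, hle, hlt⟩ :=
    (h.and_eventually (hs.tendsto_atTop_zero.eventually (gt_mem_nhds hε))).exists
  hle.not_gt hlt

lemma div_le_pow_mul_sum_Icc_inv {p : ℕ → ℝ} (hp : ∀ k, 0 < p k) {c r : ℝ} (hc : 0 < c)
    (hcr : c ≤ r) (hr : r ≤ 1) {n : ℕ} (hpn : p (n + 1) ≤ c ^ (n + 1)) :
    (1 - r) / c ≤ r ^ n * (1 - r) * ∑ k ∈ Icc 1 (n + 1), 1 / p k := by
  have hr0 : 0 ≤ r := hc.le.trans hcr
  have hr1 : 0 ≤ 1 - r := by linarith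
  calc (1 - r) / c = c ^ n * (1 - r) * (1 / c ^ (n + 1)) := by field_simp; ring
    _ ≤ r ^ n * (1 - r) * (1 / p (n + 1)) := by
      have := hp (n + 1)
      gcongr
    _ ≤ r ^ n * (1 - r) * ∑ k ∈ Icc 1 (n + 1), 1 / p k := by
      gcongr
      exact single_le_sum (fun k _ => (one_div_pos.2 (hp k)).le) (by simp : n + 1 ∈ Icc 1 (n + 1))

theorem stmt4 (l : ℝ) (hl : 0 < l ∧ l < 1)
    (p : ℕ → ℝ) (hp : ∀ j, 0 < p j ∧ p j ≤ 1)
    (hinf : ∀ N : ℕ, ∃ j ≥ N, p j ≤ (l * p 0 / 2) ^ j)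
    (r : ℝ) (hr : r = 1 - Real.exp (-(l * p 0))) :
    ¬ Summable (fun j : ℕ =>
        r ^ j * (1 - r) * ∑ k ∈ Finset.Icc 1 (j + 1), 1 / p k) := by
  have hx0 : 0 < l * p 0 := mul_pos hl.1 (hp 0).1
  have hx1 : l * p 0 ≤ 1 := by nlinarith [hp 0]
  have hcr : l * p 0 / 2 ≤ r := hr ▸ half_le_one_sub_exp_neg hx0.le hx1
  have hr1 : 0 < 1 - r := by simp [hr, exp_pos]
  refine not_summable_of_frequently_le (by positivity : 0 < (1 - r) / (l * p 0 / 2)) ?_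
  refine frequently_atTop.2 fun N => ?_
  obtain ⟨j, hj, hpj⟩ := hinf (N + 1)
  obtain ⟨n, rfl⟩ := Nat.exists_eq_add_of_le' (by omega : 1 ≤ j)
  exact ⟨n, by omega,
    div_le_pow_mul_sum_Icc_inv (fun k => (hp k).1) (by positivity) hcr (by linarith) hpj⟩
end
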